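/- arXiv:2012.03629 — 2 statements merged into one kernel-verified Lean document; each statement's English description precedes it below -/
import Mathlib

section
/- Let T = (T(n,k))_{n,k≥0} be the array with entries in ℤ[a,c,e] defined by T(0,k) = δ_{k0} and, for n ≥ 1, T(n,k) = (a(n−k)+c)·T(n−1,k−1) + e·T(n−1,k), with T(n,k) = 0 for k < 0 or k > n. Then for all 0 ≤ k ≤ n, T(n,k) equals the sum, over all set partitions π of {1,2,…,n+1} into exactly n+1−k nonempty blocks, of the product over i = 2,…,n+1 of the weight w_π(i), where w_π(i) = c if smallest(π,i) = 1, w_π(i) = e if smallest(π,i) = i, and w_π(i) = a if smallest(π,i) ∉ {1, i}. -/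
/- The polynomial ring ℤ[a,c,e]: variable 0 ↦ a, 1 ↦ c, 2 ↦ e. -/
noncomputable def aVar : MvPolynomial (Fin 3) ℤ := MvPolynomial.X 0
noncomputable def cVar : MvPolynomial (Fin 3) ℤ := MvPolynomial.X 1
noncomputable def eVar : MvPolynomial (Fin 3) ℤ := MvPolynomial.X 2

/-- The array `T(n,k)` with entries in ℤ[a,c,e], defined by `T(0,k) = δ_{k0}` and
`T(n,k) = (a(n−k)+c)·T(n−1,k−1) + e·T(n−1,k)` for `n ≥ 1`.  The second index
ranges over ℤ, so the conventions `T(n,k) = 0` for `k < 0` or `k > n` are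
automatic. -/
noncomputable def T : ℕ → ℤ → MvPolynomial (Fin 3) ℤ
  | 0, k => if k = 0 then 1 else 0
  | n + 1, k =>
      (aVar * (((n : ℤ) + 1 - k : ℤ) : MvPolynomial (Fin 3) ℤ) + cVar) * T n (k - 1)
        + eVar * T n k

/-- `smallest π i`: the smallest element of the block of the set partition `π`
containing `i`.  Here the ground set `{1,…,n+1}` is modelled by `Fin (n+1)`
(so the element `1` corresponds to `0 : Fin (n+1)`). -/
noncomputable def smallest {n : ℕ} (π : Finpartition (Finset.univ : Finset (Fin (n + 1))))
    (i : Fin (n + 1)) : Fin (n + 1) :=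
  (π.part i).min' ⟨i, π.mem_part (Finset.mem_univ i)⟩

/-- The weight `w_π(i)`: `c` if `smallest(π,i) = 1`, `e` if `smallest(π,i) = i`,
and `a` otherwise. -/
noncomputable def weight {n : ℕ} (π : Finpartition (Finset.univ : Finset (Fin (n + 1))))
    (i : Fin (n + 1)) : MvPolynomial (Fin 3) ℤ :=
  if smallest π i = 0 then cVar else if smallest π i = i then eVar else aVar


/-!
A partition of `{0, …, n}` is determined by the map sending each element to the least element
of its block; these maps are exactly the idempotent maps `s` with `s i ≤ i`, and the blocks
correspond to their fixed points. Removing the largest element `n + 1` from a partition of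
`{0, …, n + 1}` into `m + 1` blocks leaves a partition of `{0, …, n}`, and the removed element
either was a singleton block (weight `e`, leaving `m` blocks) or joined one of `m + 1` blocks:
that of `0` (weight `c`) or one of the `m` others (weight `a`). So the weighted count of
partitions into `m` blocks obeys the recurrence of `T` with `m = n + 1 - k`.
-/

open Finset

namespace Finpartition

variable {α : Type*} [DecidableEq α] {s : Finset α} {t : Finset α}

lemma mem_parts_iff_exists_part_eq (P : Finpartition s) : t ∈ P.parts ↔ ∃ a ∈ s, P.part a = t :=
  ⟨fun ht ↦ P.part_surjOn ht, fun ⟨_, ha, hat⟩ ↦ hat ▸ P.part_mem.2 ha⟩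

lemma eq_of_part_eq {P Q : Finpartition s} (h : ∀ a ∈ s, P.part a = Q.part a) : P = Q := by
  ext t
  simp only [mem_parts_iff_exists_part_eq]
  exact exists_congr fun a ↦ and_congr_right fun ha ↦ by rw [h a ha]

end Finpartition

variable {n : ℕ}

def IsLeastRep (s : Fin (n + 1) → Fin (n + 1)) : Prop :=
  ∀ i, s (s i) = s i ∧ s i ≤ i

instance (s : Fin (n + 1) → Fin (n + 1)) : Decidable (IsLeastRep s) := by
  unfold IsLeastRep; infer_instance

lemma IsLeastRep.apply_zero {s : Fin (n + 1) → Fin (n + 1)} (hs : IsLeastRep s) : s 0 = 0 :=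
  Fin.le_zero_iff.1 (hs 0).2

def fixCount (s : Fin (n + 1) → Fin (n + 1)) : ℕ := #{i | s i = i}

lemma IsLeastRep.fixCount_pos {s : Fin (n + 1) → Fin (n + 1)} (hs : IsLeastRep s) :
    0 < fixCount s :=
  card_pos.2 ⟨0, by simpa using hs.apply_zero⟩

section Smallest

variable (π : Finpartition (univ : Finset (Fin (n + 1))))

lemma smallest_mem_part (i : Fin (n + 1)) : smallest π i ∈ π.part i := min'_mem _ _

lemma smallest_le (i : Fin (n + 1)) : smallest π i ≤ i :=
  min'_le _ _ (π.mem_part (mem_univ i))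

lemma part_smallest (i : Fin (n + 1)) : π.part (smallest π i) = π.part i :=
  π.part_eq_of_mem (π.part_mem.2 (mem_univ i)) (smallest_mem_part π i)

lemma smallest_eq_smallest_iff {i j : Fin (n + 1)} :
    smallest π i = smallest π j ↔ π.part i = π.part j := by
  refine ⟨fun h ↦ by rw [← part_smallest π i, h, part_smallest], fun h ↦ ?_⟩
  simp only [smallest, h]

lemma isLeastRep_smallest : IsLeastRep (smallest π) :=
  fun i ↦ ⟨(smallest_eq_smallest_iff π).2 (part_smallest π i), smallest_le π i⟩

lemma card_parts_eq_fixCount : #π.parts = fixCount (smallest π) := by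
  symm
  refine card_nbij π.part (fun i _ ↦ π.part_mem.2 (mem_univ i)) ?_ ?_
  · intro i hi j hj h
    simp only [coe_filter, mem_univ, true_and, Set.mem_ofPred_eq] at hi hj
    rw [← hi, ← hj, smallest_eq_smallest_iff, h]
  · intro t ht
    obtain ⟨i, -, rfl⟩ := π.part_surjOn ht
    exact ⟨smallest π i, by simpa using (isLeastRep_smallest π i).1, part_smallest π i⟩

end Smallest

instance {α β : Type*} [DecidableEq β] (f : α → β) : DecidableRel (Setoid.ker f) :=
  fun _ _ ↦ decidable_of_iff _ Setoid.ker_def.symm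

def ofLeastRep (s : Fin (n + 1) → Fin (n + 1)) : Finpartition (univ : Finset (Fin (n + 1))) :=
  Finpartition.ofSetoid (Setoid.ker s)

lemma mem_part_ofLeastRep {s : Fin (n + 1) → Fin (n + 1)} {i j : Fin (n + 1)} :
    j ∈ (ofLeastRep s).part i ↔ s i = s j :=
  Finpartition.mem_part_ofSetoid_iff_rel.trans Setoid.ker_def

lemma smallest_ofLeastRep {s : Fin (n + 1) → Fin (n + 1)} (hs : IsLeastRep s) :
    smallest (ofLeastRep s) = s := by
  funext i
  refine (min'_eq_iff _ _ _).2 ⟨mem_part_ofLeastRep.2 (hs i).1.symm, fun j hj ↦ ?_⟩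
  rw [mem_part_ofLeastRep.1 hj]
  exact (hs j).2

lemma ofLeastRep_smallest (π : Finpartition (univ : Finset (Fin (n + 1)))) :
    ofLeastRep (smallest π) = π := by
  refine Finpartition.eq_of_part_eq fun i _ ↦ ?_
  ext j
  rw [mem_part_ofLeastRep, smallest_eq_smallest_iff,
    π.mem_part_iff_part_eq_part (mem_univ j) (mem_univ i), eq_comm]

/-- `weight π i` is `elemWeight i (smallest π i)`. -/
noncomputable def elemWeight (i j : Fin (n + 1)) : MvPolynomial (Fin 3) ℤ :=
  if j = 0 then cVar else if j = i then eVar else aVar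

noncomputable def repWeight (s : Fin (n + 1) → Fin (n + 1)) : MvPolynomial (Fin 3) ℤ :=
  ∏ i ∈ univ.filter (fun i : Fin (n + 1) => i ≠ 0), elemWeight i (s i)

noncomputable def blockSum (n m : ℕ) : MvPolynomial (Fin 3) ℤ :=
  ∑ s : Fin (n + 1) → Fin (n + 1) with IsLeastRep s, if fixCount s = m then repWeight s else 0

lemma sum_partitions_eq_blockSum (m : ℕ) :
    ∑ π : {π : Finpartition (univ : Finset (Fin (n + 1))) // #π.parts = m},
        ∏ i ∈ univ.filter (fun i : Fin (n + 1) => i ≠ 0), weight π.1 i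
      = blockSum n m := by
  rw [← sum_subtype _ mem_filter_univ fun π ↦ ∏ i ∈ univ.filter (· ≠ 0), weight π i, sum_filter,
    blockSum]
  refine sum_nbij' smallest ofLeastRep (fun π _ ↦ (mem_filter_univ _).2 (isLeastRep_smallest π))
    (fun _ _ ↦ mem_univ _) (fun π _ ↦ ofLeastRep_smallest π)
    (fun s hs ↦ smallest_ofLeastRep ((mem_filter_univ _).1 hs)) fun π _ ↦ ?_
  rw [card_parts_eq_fixCount]
  rfl

section Extension

def snocRep (s : Fin (n + 1) → Fin (n + 1)) (j : Fin (n + 2)) : Fin (n + 2) → Fin (n + 2) :=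
  Fin.snoc (α := fun _ ↦ Fin (n + 2)) (fun i ↦ (s i).castSucc) j

@[simp]
lemma snocRep_castSucc (s : Fin (n + 1) → Fin (n + 1)) (j : Fin (n + 2)) (i : Fin (n + 1)) :
    snocRep s j i.castSucc = (s i).castSucc :=
  Fin.snoc_castSucc (α := fun _ ↦ Fin (n + 2)) _ _ _

@[simp]
lemma snocRep_last (s : Fin (n + 1) → Fin (n + 1)) (j : Fin (n + 2)) :
    snocRep s j (Fin.last _) = j :=
  Fin.snoc_last (α := fun _ ↦ Fin (n + 2)) _ _

/-- The clamp is a junk value, never reached when `s i ≤ i`. -/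
def initRep (s : Fin (n + 2) → Fin (n + 2)) : Fin (n + 1) → Fin (n + 1) :=
  fun i ↦ Fin.clamp (s i.castSucc) n

lemma castSucc_initRep {s : Fin (n + 2) → Fin (n + 2)} (hs : ∀ i, s i ≤ i) (i : Fin (n + 1)) :
    (initRep s i).castSucc = s i.castSucc := by
  have := hs i.castSucc
  ext
  simp only [initRep, Fin.val_castSucc, Fin.coe_clamp, Fin.le_def] at this ⊢
  omega

lemma initRep_snocRep (s : Fin (n + 1) → Fin (n + 1)) (j : Fin (n + 2)) :
    initRep (snocRep s j) = s := by
  funext i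
  ext
  simp [initRep, Fin.coe_clamp, Nat.le_of_lt_succ (s i).isLt]

lemma snocRep_initRep {s : Fin (n + 2) → Fin (n + 2)} (hs : ∀ i, s i ≤ i) :
    snocRep (initRep s) (s (Fin.last _)) = s := by
  funext i
  induction i using Fin.lastCases with
  | last => exact snocRep_last _ _
  | cast i => rw [snocRep_castSucc, castSucc_initRep hs]

lemma isLeastRep_snocRep_iff {s : Fin (n + 1) → Fin (n + 1)} {j : Fin (n + 2)} :
    IsLeastRep (snocRep s j) ↔ IsLeastRep s ∧ snocRep s j j = j := by
  simp [IsLeastRep, Fin.forall_fin_succ' (n := n + 1), Fin.castSucc_le_castSucc_iff, Fin.le_last]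

lemma fixCount_snocRep (s : Fin (n + 1) → Fin (n + 1)) (j : Fin (n + 2)) :
    fixCount (snocRep s j) = fixCount s + if j = Fin.last _ then 1 else 0 := by
  rw [fixCount, fixCount, card_filter, card_filter, Fin.sum_univ_castSucc]
  simp

lemma repWeight_snocRep (s : Fin (n + 1) → Fin (n + 1)) (j : Fin (n + 2)) :
    repWeight (snocRep s j) = repWeight s * elemWeight (Fin.last _) j := by
  simp [repWeight, prod_filter, Fin.prod_univ_castSucc (n := n + 1), elemWeight]

end Extension

lemma sum_isLeastRep_succ {M : Type*} [AddCommMonoid M] (f : (Fin (n + 2) → Fin (n + 2)) → M) :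
    ∑ s with IsLeastRep s, f s
      = ∑ s with IsLeastRep s,
          (f (snocRep s (Fin.last _)) + ∑ j with s j = j, f (snocRep s j.castSucc)) := by
  have split_last (s : Fin (n + 1) → Fin (n + 1)) :
      ∑ j with snocRep s j j = j, f (snocRep s j)
        = f (snocRep s (Fin.last _)) + ∑ j with s j = j, f (snocRep s j.castSucc) := by
    rw [sum_filter, sum_filter, Fin.sum_univ_castSucc, add_comm]
    simp
  simp_rw [← split_last]
  rw [← sum_finset_product' (univ.filter fun p ↦ IsLeastRep (snocRep p.1 p.2)) _ _
    (fun p ↦ by simp [isLeastRep_snocRep_iff]) (f := fun s j ↦ f (snocRep s j))]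
  have snocRep_initRep_of_mem {s : Fin (n + 2) → Fin (n + 2)} (hs : s ∈ univ.filter IsLeastRep) :
      snocRep (initRep s) (s (Fin.last _)) = s :=
    snocRep_initRep fun i ↦ ((mem_filter_univ s).1 hs i).2
  refine sum_nbij' (fun s ↦ (initRep s, s (Fin.last _))) (fun p ↦ snocRep p.1 p.2)
    (fun s hs ↦ ?_) (fun p hp ↦ ?_) (fun s hs ↦ snocRep_initRep_of_mem hs)
    (fun p _ ↦ Prod.ext (initRep_snocRep _ _) (snocRep_last _ _))
    (fun s hs ↦ by rw [snocRep_initRep_of_mem hs])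
  · simpa [snocRep_initRep_of_mem hs] using hs
  · simpa using hp

lemma sum_fixed_elemWeight_last {s : Fin (n + 1) → Fin (n + 1)} (hs : IsLeastRep s) :
    ∑ j with s j = j, elemWeight (Fin.last _) j.castSucc
      = cVar + ((fixCount s - 1 : ℕ) : MvPolynomial (Fin 3) ℤ) * aVar := by
  have zero_mem : (0 : Fin (n + 1)) ∈ univ.filter (fun j ↦ s j = j) := by
    simpa using hs.apply_zero
  rw [← add_sum_erase _ _ zero_mem, sum_congr rfl (g := fun _ ↦ aVar), sum_const,
    card_erase_of_mem zero_mem, nsmul_eq_mul, fixCount]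
  · simp [elemWeight]
  · intro j hj
    simp [elemWeight, (mem_erase.1 hj).1, (Fin.castSucc_lt_last j).ne]

lemma blockSum_succ_succ (n m : ℕ) :
    blockSum (n + 1) (m + 1)
      = eVar * blockSum n m + (cVar + m * aVar) * blockSum n (m + 1) := by
  rw [blockSum, sum_isLeastRep_succ, blockSum, blockSum, mul_sum, mul_sum, ← sum_add_distrib]
  refine sum_congr rfl fun s hs ↦ ?_
  simp only [fixCount_snocRep, repWeight_snocRep, if_pos, (Fin.castSucc_lt_last _).ne,
    if_false, add_zero, Nat.add_right_cancel_iff]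
  have new_block : elemWeight (Fin.last (n + 1)) (Fin.last (n + 1)) = eVar := by
    simp [elemWeight]
  by_cases hm : fixCount s = m
  · simp [hm, new_block, mul_comm]
  by_cases hm' : fixCount s = m + 1
  · simp_rw [if_pos hm', if_neg hm]
    rw [← mul_sum, sum_fixed_elemWeight_last ((mem_filter_univ s).1 hs), hm']
    simp [mul_comm]
  · simp [hm, hm']

lemma blockSum_zero_right (n : ℕ) : blockSum n 0 = 0 :=
  sum_eq_zero fun _ hs ↦ if_neg ((mem_filter_univ _).1 hs).fixCount_pos.ne'

lemma blockSum_zero_left (m : ℕ) : blockSum 0 m = if m = 1 then 1 else 0 := by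
  simp [blockSum, fixCount, repWeight, IsLeastRep, Subsingleton.elim _ (0 : Fin 1), eq_comm]

-- Via `Int.toNat`, `k > n + 1` means `0` blocks and `k < 0` more than `n + 1`: both sides vanish.
lemma T_eq_blockSum (n : ℕ) (k : ℤ) : T n k = blockSum n (n + 1 - k).toNat := by
  induction n generalizing k with
  | zero =>
    rw [T, blockSum_zero_left]
    exact if_congr (by omega) rfl rfl
  | succ n ih =>
    rw [T, ih, ih]
    rcases le_or_gt k (n + 1) with hk | hk
    · obtain ⟨m, hm⟩ : ∃ m : ℕ, (n : ℤ) + 1 - k = m := ⟨_, (Int.toNat_of_nonneg (by omega)).symm⟩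
      rw [show ((n + 1 : ℕ) : ℤ) + 1 - k = m + 1 by push_cast; omega,
        show (n : ℤ) + 1 - (k - 1) = m + 1 by omega, hm]
      simp only [Int.toNat_natCast, ← Nat.cast_succ, blockSum_succ_succ]
      push_cast
      ring
    · simp [Int.toNat_of_nonpos, blockSum_zero_right, show (n : ℤ) + 1 - k ≤ 0 by omega,
        show (n : ℤ) + 1 - (k - 1) ≤ 0 by omega, show (n : ℤ) + 1 + 1 - k ≤ 0 by omega]

theorem T_eq_sum_over_partitions_general (n k : ℕ) :
    T n (k : ℤ)
      = ∑ π : {π : Finpartition (Finset.univ : Finset (Fin (n + 1))) //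
            π.parts.card = n + 1 - k},
          ∏ i ∈ Finset.univ.filter (fun i : Fin (n + 1) => i ≠ 0), weight π.1 i := by
  rw [T_eq_blockSum, sum_partitions_eq_blockSum]
  congr 1
  omega

/-- For `0 ≤ k ≤ n`, `T(n,k)` is the sum, over all set partitions `π` of
`{1,…,n+1}` into exactly `n+1−k` nonempty blocks, of `∏_{i=2}^{n+1} w_π(i)`.
(The product over `i = 2,…,n+1` is the product over the nonzero elements of
`Fin (n+1)`.) -/
theorem T_eq_sum_over_partitions (n k : ℕ) (hk : k ≤ n) :
    T n (k : ℤ)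
      = ∑ π : {π : Finpartition (Finset.univ : Finset (Fin (n + 1))) //
            π.parts.card = n + 1 - k},
          ∏ i ∈ Finset.univ.filter (fun i : Fin (n + 1) => i ≠ 0), weight π.1 i :=
  T_eq_sum_over_partitions_general n k
end

section
/- Let T = (T(n,k))_{n,k≥0} be the array with entries in ℤ[a,c,e] defined by T(0,k) = δ_{k0} and, for n ≥ 1, T(n,k) = (a(n−k)+c)·T(n−1,k−1) + e·T(n−1,k), with T(n,k) = 0 for n < 0 or k < 0. Then T also satisfies, for all n ≥ 1 and k ≥ 0, the recurrence T(n,k) = c·T(n−1,k−1) + Σ_{m=0}^{n−1} binom(n−1,m) · a^m · e · T(n−1−m, k−m). -/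
lemma T_succ (n : ℕ) (k : ℤ) :
    T (n + 1) k
      = (aVar * (((n : ℤ) + 1 - k : ℤ) : MvPolynomial (Fin 3) ℤ) + cVar) * T n (k - 1)
        + eVar * T n k := rfl

/-- Key lemma: `a·(n+1−k)·T(n,k−1) = Σ_{m=1}^{n} C(n,m)·a^m·e·T(n−m,k−m)`. -/
lemma T_key (n : ℕ) : ∀ k : ℤ,
    aVar * (((n : ℤ) + 1 - k : ℤ) : MvPolynomial (Fin 3) ℤ) * T n (k - 1)
      = ∑ m ∈ Finset.range n,
          ((n.choose (m + 1) : ℕ) : MvPolynomial (Fin 3) ℤ) * aVar ^ (m + 1) * eVar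
            * T (n - 1 - m) (k - (m + 1)) := by
  induction n with
  | zero =>
      intro k
      simp only [Finset.range_zero, Finset.sum_empty]
      by_cases hk : k = 1
      · subst hk; norm_num
      · have h0 : T 0 (k - 1) = 0 := by
          show (if k - 1 = 0 then (1 : MvPolynomial (Fin 3) ℤ) else 0) = 0
          rw [if_neg (by omega)]
        rw [h0, mul_zero]
  | succ n ih =>
      intro k
      have hA : ∑ m ∈ Finset.range (n + 1),
          ((n.choose (m + 1) : ℕ) : MvPolynomial (Fin 3) ℤ) * aVar ^ (m + 1) * eVar
            * T (n - m) (k - (m + 1))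
          = (aVar * (((n : ℤ) + 1 - k : ℤ) : MvPolynomial (Fin 3) ℤ) + cVar)
              * (aVar * (((n : ℤ) + 1 - (k - 1) : ℤ) : MvPolynomial (Fin 3) ℤ)
                  * T n (k - 1 - 1))
            + eVar * (aVar * (((n : ℤ) + 1 - k : ℤ) : MvPolynomial (Fin 3) ℤ)
                  * T n (k - 1)) := by
        rw [Finset.sum_range_succ, Nat.choose_succ_self]
        push_cast
        rw [zero_mul, zero_mul, zero_mul, add_zero]
        have hcongr : ∀ m ∈ Finset.range n,
            ((n.choose (m + 1) : ℕ) : MvPolynomial (Fin 3) ℤ) * aVar ^ (m + 1) * eVar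
              * T (n - m) (k - (m + 1))
            = (aVar * (((n : ℤ) + 1 - k : ℤ) : MvPolynomial (Fin 3) ℤ) + cVar)
                * (((n.choose (m + 1) : ℕ) : MvPolynomial (Fin 3) ℤ) * aVar ^ (m + 1) * eVar
                    * T (n - 1 - m) (k - 1 - ((m : ℤ) + 1)))
              + eVar * (((n.choose (m + 1) : ℕ) : MvPolynomial (Fin 3) ℤ) * aVar ^ (m + 1)
                    * eVar * T (n - 1 - m) (k - ((m : ℤ) + 1))) := by
          intro m hm
          have hm' : m < n := Finset.mem_range.mp hm
          have h1 : n - m = (n - 1 - m) + 1 := by omega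
          rw [h1, T_succ]
          have h2 : ((n - 1 - m : ℕ) : ℤ) + 1 - (k - ((m : ℤ) + 1)) = (n : ℤ) + 1 - k := by
            omega
          rw [h2, show k - ((m : ℤ) + 1) - 1 = k - 1 - ((m : ℤ) + 1) by ring]
          ring
        rw [Finset.sum_congr rfl hcongr, Finset.sum_add_distrib, ← Finset.mul_sum,
          ← Finset.mul_sum, ← ih (k - 1), ← ih k]
        push_cast
        ring
      have hB : ∑ m ∈ Finset.range (n + 1),
          ((n.choose m : ℕ) : MvPolynomial (Fin 3) ℤ) * aVar ^ (m + 1) * eVar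
            * T (n - m) (k - (m + 1))
          = aVar * (aVar * (((n : ℤ) + 1 - (k - 1) : ℤ) : MvPolynomial (Fin 3) ℤ)
                * T n (k - 1 - 1))
            + aVar * eVar * T n (k - 1) := by
        rw [Finset.sum_range_succ']
        have hcongr : ∀ m ∈ Finset.range n,
            ((n.choose (m + 1) : ℕ) : MvPolynomial (Fin 3) ℤ) * aVar ^ (m + 1 + 1) * eVar
              * T (n - (m + 1)) (k - (((m : ℕ) + 1 : ℕ) + 1))
            = aVar * (((n.choose (m + 1) : ℕ) : MvPolynomial (Fin 3) ℤ) * aVar ^ (m + 1)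
                * eVar * T (n - 1 - m) (k - 1 - ((m : ℤ) + 1))) := by
          intro m hm
          rw [show n - (m + 1) = n - 1 - m by omega,
            show (k - ((((m : ℕ) + 1 : ℕ) : ℤ) + 1)) = k - 1 - ((m : ℤ) + 1) by push_cast; ring]
          ring
        rw [Finset.sum_congr rfl hcongr, ← Finset.mul_sum, ← ih (k - 1)]
        norm_num
      calc
        aVar * ((((n + 1 : ℕ) : ℤ) + 1 - k : ℤ) : MvPolynomial (Fin 3) ℤ) * T (n + 1) (k - 1)
            = (aVar * (((n : ℤ) + 1 - k : ℤ) : MvPolynomial (Fin 3) ℤ) + cVar)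
                * (aVar * (((n : ℤ) + 1 - (k - 1) : ℤ) : MvPolynomial (Fin 3) ℤ)
                    * T n (k - 1 - 1))
              + eVar * (aVar * (((n : ℤ) + 1 - k : ℤ) : MvPolynomial (Fin 3) ℤ)
                    * T n (k - 1))
              + (aVar * (aVar * (((n : ℤ) + 1 - (k - 1) : ℤ) : MvPolynomial (Fin 3) ℤ)
                    * T n (k - 1 - 1))
                + aVar * eVar * T n (k - 1)) := by
              rw [T_succ]
              push_cast
              ring
        _ = ∑ m ∈ Finset.range (n + 1),
              (((n + 1).choose (m + 1) : ℕ) : MvPolynomial (Fin 3) ℤ) * aVar ^ (m + 1) * eVar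
                * T (n + 1 - 1 - m) (k - (m + 1)) := by
              rw [← hA, ← hB, ← Finset.sum_add_distrib]
              refine Finset.sum_congr rfl fun m hm => ?_
              rw [show n + 1 - 1 - m = n - m by omega, Nat.choose_succ_succ']
              push_cast
              ring

/-- The alternate recurrence: for `n ≥ 1` and `k ≥ 0`,
`T(n,k) = c·T(n−1,k−1) + Σ_{m=0}^{n−1} binom(n−1,m)·a^m·e·T(n−1−m,k−m)`. -/
theorem T_alternate_recurrence (n : ℕ) (hn : 1 ≤ n) (k : ℕ) :
    T n (k : ℤ)
      = cVar * T (n - 1) ((k : ℤ) - 1)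
        + ∑ m ∈ Finset.range n,
            ((n - 1).choose m : MvPolynomial (Fin 3) ℤ) * aVar ^ m * eVar
              * T (n - 1 - m) ((k : ℤ) - (m : ℤ)) := by
  cases n with
  | zero => omega
  | succ N =>
      simp only [Nat.add_sub_cancel]
      rw [Finset.sum_range_succ']
      have hcongr : ∀ m ∈ Finset.range N,
          ((N.choose (m + 1) : ℕ) : MvPolynomial (Fin 3) ℤ) * aVar ^ (m + 1) * eVar
            * T (N - (m + 1)) ((k : ℤ) - (((m : ℕ) + 1 : ℕ) : ℤ))
          = ((N.choose (m + 1) : ℕ) : MvPolynomial (Fin 3) ℤ) * aVar ^ (m + 1) * eVar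
            * T (N - 1 - m) ((k : ℤ) - ((m : ℤ) + 1)) := by
        intro m hm
        rw [show N - (m + 1) = N - 1 - m by omega,
          show ((k : ℤ) - (((m : ℕ) + 1 : ℕ) : ℤ)) = (k : ℤ) - ((m : ℤ) + 1) by push_cast; ring]
      rw [Finset.sum_congr rfl hcongr, ← T_key N (k : ℤ), T_succ]
      simp only [Nat.choose_zero_right, Nat.cast_zero, Nat.cast_one, pow_zero, Nat.sub_zero]
      push_cast
      ring
end
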